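/- Explicit spectrogram densities for a one-dimensional Gaussian wave packet: Let ε > 0, w ∈ ℝ², N ≥ 1, and define h : ℝ² → ℝ by h(z) = (2πε)^{−1} e^{−|z−w|²/(2ε)} (the Husimi function of the Gaussian wave packet centered at w). Then for every z ∈ ℝ², Σ_{m=0}^{N−1} (1/m!) (−ε/4)^m Δ^m h(z) = (2πε)^{−1} e^{−|z−w|²/(2ε)} · Σ_{j=0}^{N−1} (−1)^j ( (|z−w|²/(2ε))^j / j! ) · Σ_{m=j}^{N−1} 2^{−m} binom(m, j), where Δ is the Laplacian on ℝ². -/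

import Mathlib

/-!
With `u = |z - w|² / (2ε)` we have `h = (2πε)⁻¹ e^{-u}`, and on functions of `u` the Laplacian acts
as `F ↦ (2/ε) (u F'' + F')`. On `p(u) e^{-u}` this becomes a second-order operator on the
polynomial `p`, under which the Laguerre polynomials satisfy `L_m ↦ -(m + 1) L_{m+1}`. Hence
`Δ^m h = (2πε)⁻¹ (-2/ε)^m m! L_m(u) e^{-u}`, the weights `(-ε/4)^m / m!` turn the left-hand side
into `(2πε)⁻¹ e^{-u} ∑ 2^{-m} L_m(u)`, and expanding `L_m` and exchanging the two sums gives the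
right-hand side.
-/

open Finset

noncomputable section

/-- The Laplacian `∂²/∂q² + ∂²/∂p²` on `ℝ²`. -/
def lap2 (f : ℝ × ℝ → ℝ) : ℝ × ℝ → ℝ := fun z =>
  iteratedDeriv 2 (fun t => f (t, z.2)) z.1 + iteratedDeriv 2 (fun t => f (z.1, t)) z.2

/-- The Husimi function of the Gaussian wave packet centered at `w ∈ ℝ²`:
`h(z) = (2πε)^{−1} e^{−|z−w|²/(2ε)}`. -/
def husimiGauss (ε : ℝ) (w : ℝ × ℝ) : ℝ × ℝ → ℝ := fun z =>
  (2 * Real.pi * ε)⁻¹ *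
    Real.exp (-((z.1 - w.1) ^ 2 + (z.2 - w.2) ^ 2) / (2 * ε))

open Polynomial

lemma choose_laguerre_recurrence (m n : ℕ) :
    (n + 2) * m.choose (n + 2) + (2 * n + 3) * m.choose (n + 1) + (n + 1) * m.choose n
      = (m + 1) * (m + 1).choose (n + 1) := by
  induction m generalizing n with
  | zero => rcases n with _ | n <;> simp [Nat.choose]
  | succ m ih =>
    rcases n with _ | n
    · have h := ih 0
      simp only [Nat.choose_succ_succ, Nat.choose_zero_right, zero_add, Nat.choose_one_right] at *
      zify at h ⊢
      linear_combination h
    · have h1 := ih (n + 1)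
      have h2 := ih n
      simp only [Nat.choose_succ_succ] at *
      zify at h1 h2 ⊢
      linear_combination h1 + h2

def laguerre (m : ℕ) : ℝ[X] :=
  ∑ j ∈ range (m + 1), C ((-1 : ℝ) ^ j * m.choose j / j.factorial) * X ^ j

lemma laguerre_zero : laguerre 0 = 1 := by
  simp [laguerre]

lemma coeff_laguerre (m n : ℕ) :
    (laguerre m).coeff n = (-1 : ℝ) ^ n * m.choose n / n.factorial := by
  simp only [laguerre, finsetSum_coeff, coeff_C_mul, coeff_X_pow, mul_ite, mul_one, mul_zero,
    sum_ite_eq, mem_range]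
  split_ifs with h
  · rfl
  · simp [Nat.choose_eq_zero_of_lt (not_lt.mp h)]

lemma eval_laguerre (m : ℕ) (t : ℝ) :
    (laguerre m).eval t = ∑ j ∈ range (m + 1), (-1) ^ j * m.choose j / j.factorial * t ^ j := by
  simp [laguerre, eval_finsetSum]

/-- If `F(t) = p(t) e^{-t}`, then `t F'' + F' = (laguerreOp p)(t) e^{-t}`. -/
def laguerreOp (p : ℝ[X]) : ℝ[X] :=
  X * (derivative (derivative p - p) - (derivative p - p)) + (derivative p - p)

lemma laguerreOp_smul (c : ℝ) (p : ℝ[X]) : laguerreOp (c • p) = c • laguerreOp p := by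
  simp only [laguerreOp, derivative_smul, ← smul_sub, mul_smul_comm, smul_add]

lemma coeff_laguerreOp_zero (p : ℝ[X]) : (laguerreOp p).coeff 0 = p.coeff 1 - p.coeff 0 := by
  simp [laguerreOp, coeff_derivative]

lemma coeff_laguerreOp_succ (p : ℝ[X]) (n : ℕ) :
    (laguerreOp p).coeff (n + 1)
      = (n + 2) ^ 2 * p.coeff (n + 2) - (2 * n + 3) * p.coeff (n + 1) + p.coeff n := by
  simp only [laguerreOp, coeff_add, coeff_X_mul, coeff_sub, coeff_derivative]
  push_cast
  ring

lemma laguerreOp_laguerre (m : ℕ) : laguerreOp (laguerre m) = (-(m + 1) : ℝ) • laguerre (m + 1) := by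
  ext n
  rw [coeff_smul, smul_eq_mul]
  rcases n with _ | n
  · simp [coeff_laguerreOp_zero, coeff_laguerre]
    ring
  · have h : ((n + 2) * m.choose (n + 2) + (2 * n + 3) * m.choose (n + 1) + (n + 1) * m.choose n
        : ℝ) = (m + 1) * (m + 1).choose (n + 1) := by
      exact_mod_cast choose_laguerre_recurrence m n
    simp only [coeff_laguerreOp_succ, coeff_laguerre, Nat.factorial_succ]
    push_cast
    field_simp
    linear_combination (-1 : ℝ) ^ n * (n + 2) * h

def polyExpNeg (p : ℝ[X]) (t : ℝ) : ℝ := p.eval t * Real.exp (-t)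

lemma hasDerivAt_polyExpNeg (p : ℝ[X]) (t : ℝ) :
    HasDerivAt (polyExpNeg p) (polyExpNeg (derivative p - p) t) t := by
  have h : HasDerivAt (fun s => p.eval s * Real.exp (-s))
      ((derivative p).eval t * Real.exp (-t) + p.eval t * (Real.exp (-t) * -1)) t :=
    (p.hasDerivAt t).mul (hasDerivAt_neg t).exp
  refine h.congr_deriv ?_
  simp only [polyExpNeg, eval_sub]
  ring

lemma polyExpNeg_smul (c : ℝ) (p : ℝ[X]) (t : ℝ) : polyExpNeg (c • p) t = c * polyExpNeg p t := by
  simp only [polyExpNeg, eval_smul, smul_eq_mul, mul_assoc]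

def gaussExponent (ε : ℝ) (w z : ℝ × ℝ) : ℝ := ((z.1 - w.1) ^ 2 + (z.2 - w.2) ^ 2) / (2 * ε)

section RadialLaplacian

variable {F F' F'' : ℝ → ℝ} {ε : ℝ}

lemma iteratedDeriv_two_comp_sq_div (hF : ∀ t, HasDerivAt F (F' t) t)
    (hF' : ∀ t, HasDerivAt F' (F'' t) t) (hε : ε ≠ 0) (a c x : ℝ) :
    iteratedDeriv 2 (fun x => F (((x - a) ^ 2 + c) / (2 * ε))) x
      = F'' (((x - a) ^ 2 + c) / (2 * ε)) * ((x - a) / ε) ^ 2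
        + F' (((x - a) ^ 2 + c) / (2 * ε)) / ε := by
  have hv : ∀ x, HasDerivAt (fun x => ((x - a) ^ 2 + c) / (2 * ε)) ((x - a) / ε) x := by
    intro x
    have h : HasDerivAt (fun x => (x - a) ^ 2 + c) (2 * (x - a)) x := by
      simpa using (((hasDerivAt_id x).sub_const a).pow 2).add_const c
    refine (h.div_const (2 * ε)).congr_deriv ?_
    field_simp
  have hd : deriv (fun x => F (((x - a) ^ 2 + c) / (2 * ε)))
      = fun x => F' (((x - a) ^ 2 + c) / (2 * ε)) * ((x - a) / ε) :=
    funext fun x => ((hF _).comp x (hv x)).deriv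
  have hl : HasDerivAt (fun x => (x - a) / ε) (1 / ε) x := by
    simpa using ((hasDerivAt_id x).sub_const a).div_const ε
  have hd' : HasDerivAt (fun x => F' (((x - a) ^ 2 + c) / (2 * ε)) * ((x - a) / ε))
      (F'' (((x - a) ^ 2 + c) / (2 * ε)) * ((x - a) / ε) * ((x - a) / ε)
        + F' (((x - a) ^ 2 + c) / (2 * ε)) * (1 / ε)) x :=
    ((hF' _).comp x (hv x)).mul hl
  rw [iteratedDeriv_succ, iteratedDeriv_one, hd, hd'.deriv]
  ring

/-- Chain rule `Δ(F ∘ u) = F''(u) |∇u|² + F'(u) Δu`, with `|∇u|² = 2u/ε` and `Δu = 2/ε`. -/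
lemma lap2_comp_gaussExponent (hF : ∀ t, HasDerivAt F (F' t) t)
    (hF' : ∀ t, HasDerivAt F' (F'' t) t) (hε : ε ≠ 0) (w z : ℝ × ℝ) :
    lap2 (fun z => F (gaussExponent ε w z)) z
      = 2 / ε * (gaussExponent ε w z * F'' (gaussExponent ε w z) + F' (gaussExponent ε w z)) := by
  have hswap : (fun t => F (((z.1 - w.1) ^ 2 + (t - w.2) ^ 2) / (2 * ε)))
      = fun t => F (((t - w.2) ^ 2 + (z.1 - w.1) ^ 2) / (2 * ε)) := by
    simp only [add_comm]
  simp only [lap2, gaussExponent, hswap]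
  rw [iteratedDeriv_two_comp_sq_div hF hF' hε, iteratedDeriv_two_comp_sq_div hF hF' hε,
    add_comm ((z.2 - w.2) ^ 2)]
  field_simp
  ring

end RadialLaplacian

lemma lap2_polyExpNeg_gaussExponent {ε : ℝ} (hε : ε ≠ 0) (w : ℝ × ℝ) (p : ℝ[X]) :
    lap2 (fun z => polyExpNeg p (gaussExponent ε w z))
      = fun z => polyExpNeg ((2 / ε) • laguerreOp p) (gaussExponent ε w z) := by
  funext z
  rw [lap2_comp_gaussExponent (hasDerivAt_polyExpNeg p) (hasDerivAt_polyExpNeg _) hε,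
    polyExpNeg_smul]
  simp only [polyExpNeg, laguerreOp, eval_add, eval_mul, eval_X]
  ring

lemma iterate_lap2_husimiGauss {ε : ℝ} (hε : ε ≠ 0) (w : ℝ × ℝ) (m : ℕ) :
    lap2^[m] (husimiGauss ε w) = fun z =>
      polyExpNeg (((2 * Real.pi * ε)⁻¹ * (-2 / ε) ^ m * m.factorial) • laguerre m)
        (gaussExponent ε w z) := by
  induction m with
  | zero =>
    funext z
    simp only [Function.iterate_zero, id, husimiGauss, polyExpNeg, gaussExponent, laguerre_zero,
      neg_div, pow_zero, Nat.factorial_zero, Nat.cast_one, mul_one, eval_smul, eval_one,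
      smul_eq_mul]
  | succ m ih =>
    rw [Function.iterate_succ_apply', ih, lap2_polyExpNeg_gaussExponent hε, laguerreOp_smul,
      laguerreOp_laguerre, smul_smul, smul_smul]
    push_cast [pow_succ, Nat.factorial_succ]
    field_simp

lemma sum_range_mul_eval_laguerre (a : ℕ → ℝ) (N : ℕ) (t : ℝ) :
    ∑ m ∈ range N, a m * (laguerre m).eval t
      = ∑ j ∈ range N, (-1 : ℝ) ^ j * (t ^ j / j.factorial)
          * ∑ m ∈ Icc j (N - 1), a m * m.choose j := by
  simp only [eval_laguerre, mul_sum, range_eq_Ico]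
  rw [← sum_Ico_Ico_comm]
  refine sum_congr rfl fun j hj => sum_congr ?_ fun m _ => by ring
  rw [← Ico_add_one_right_eq_Icc, Nat.sub_add_cancel (by simp at hj; omega)]

theorem spectrogram_density_gaussian_wavepacket_general
    (ε : ℝ) (hε : 0 < ε) (w : ℝ × ℝ) (N : ℕ) (z : ℝ × ℝ) :
    ∑ m ∈ Finset.range N,
        ((Nat.factorial m : ℝ))⁻¹ * (-ε / 4) ^ m * (lap2^[m] (husimiGauss ε w)) z =
      (2 * Real.pi * ε)⁻¹ *
        Real.exp (-((z.1 - w.1) ^ 2 + (z.2 - w.2) ^ 2) / (2 * ε)) *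
        ∑ j ∈ Finset.range N,
          (-1 : ℝ) ^ j *
            ((((z.1 - w.1) ^ 2 + (z.2 - w.2) ^ 2) / (2 * ε)) ^ j /
              (Nat.factorial j : ℝ)) *
            ∑ m ∈ Finset.Icc j (N - 1), ((2 : ℝ) ^ m)⁻¹ * (m.choose j : ℝ) := by
  have hscale (m : ℕ) : (-ε / 4) ^ m * (-2 / ε) ^ m = ((2 : ℝ) ^ m)⁻¹ := by
    rw [← mul_pow, ← inv_pow]
    congr 1
    field_simp
    ring
  have hterm (m : ℕ) : ((m.factorial : ℝ))⁻¹ * (-ε / 4) ^ m * (lap2^[m] (husimiGauss ε w)) z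
      = (2 * Real.pi * ε)⁻¹ * Real.exp (-gaussExponent ε w z)
          * (((2 : ℝ) ^ m)⁻¹ * (laguerre m).eval (gaussExponent ε w z)) := by
    rw [iterate_lap2_husimiGauss hε.ne']
    dsimp only
    rw [polyExpNeg_smul, ← hscale]
    simp only [polyExpNeg]
    field_simp
  rw [sum_congr rfl fun m _ => hterm m, ← mul_sum, sum_range_mul_eval_laguerre, gaussExponent,
    neg_div]

/-- Explicit spectrogram densities for a one-dimensional Gaussian wave packet:
`Σ_{m<N} (1/m!)(−ε/4)^m Δ^m h = (2πε)^{−1} e^{−|z−w|²/(2ε)} Σ_{j<N} (−1)^j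
((|z−w|²/(2ε))^j/j!) Σ_{m=j}^{N−1} 2^{−m} binom(m,j)`. -/
theorem spectrogram_density_gaussian_wavepacket
    (ε : ℝ) (hε : 0 < ε) (w : ℝ × ℝ) (N : ℕ) (hN : 1 ≤ N) (z : ℝ × ℝ) :
    ∑ m ∈ Finset.range N,
        ((Nat.factorial m : ℝ))⁻¹ * (-ε / 4) ^ m * (lap2^[m] (husimiGauss ε w)) z =
      (2 * Real.pi * ε)⁻¹ *
        Real.exp (-((z.1 - w.1) ^ 2 + (z.2 - w.2) ^ 2) / (2 * ε)) *
        ∑ j ∈ Finset.range N,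
          (-1 : ℝ) ^ j *
            ((((z.1 - w.1) ^ 2 + (z.2 - w.2) ^ 2) / (2 * ε)) ^ j /
              (Nat.factorial j : ℝ)) *
            ∑ m ∈ Finset.Icc j (N - 1), ((2 : ℝ) ^ m)⁻¹ * (m.choose j : ℝ) :=
  spectrogram_density_gaussian_wavepacket_general ε hε w N z
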